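/- There exist constants C > 0 and δ ∈ (0,1) (δ as in the exponential-decay lemma for Walsh products) such that the following holds. Let t², s be natural numbers with t² < s, fix binary digits k_0,…,k_{t²} ∈ {0,1}, and for x = (x¹,x²) ∈ [0,1)² set F_{t²,s}(x) = sup_{n < 2^s} |Σ_{k_{t²+1},…,k_{s−1} ∈ {0,1}} ω_{k^{(t²+1)}}(x¹) ω_{(n+k)^{(t²+1)}}(x²)|, where k = Σ_{j=0}^{s−1} k_j 2^j. Then for every two-dimensional dyadic square I_{t²+1}(u¹) × I_{t²+1}(u²) one has 2^{2t²} ∫_{I_{t²+1}(u¹)×I_{t²+1}(u²)} F_{t²,s}(x) dx ≤ C 2^{s−t²} δ^{s−t²}. -/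

import Mathlib

open MeasureTheory

/-- The `j`-th binary digit of `x ∈ [0,1)`, using the expansion terminating in zeros. -/
noncomputable def dig (x : ℝ) (j : ℕ) : ℕ := (⌊x * 2 ^ (j + 1)⌋).toNat % 2

/-- The Walsh–Paley function `ω_n(x) = (−1)^{Σ_j n_j x_j}`. -/
noncomputable def walsh (n : ℕ) (x : ℝ) : ℝ :=
  (-1 : ℝ) ^ (∑ j ∈ Finset.range (n + 1), (n.testBit j).toNat * dig x j)

/-- Upper truncation `n^{(s)} = Σ_{j≥s} n_j 2^j`. -/
def upp (n s : ℕ) : ℕ := 2 ^ s * (n / 2 ^ s)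

/-- The dyadic interval of rank `a` containing `u`:
`I_a(u) = {y ∈ [0,1) : y_j = u_j for all j < a}`. -/
def Idyadic (a : ℕ) (u : ℝ) : Set ℝ :=
  {y : ℝ | y ∈ Set.Ico (0 : ℝ) 1 ∧ ∀ j < a, dig y j = dig u j}

/-- The function `F_{t²,s}` with fixed lower binary digits `k_0,…,k_{t²}` encoded by the
number `m < 2^{t²+1}`: the supremum over `n < 2^s` of the absolute value of the sum over the
free digits `k_{t²+1},…,k_{s−1}` of `ω_{k^{(t²+1)}}(x¹) ω_{(n+k)^{(t²+1)}}(x²)`, where a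
generic `k = m + r·2^{t²+1}` with `r < 2^{s−t²−1}`. -/
noncomputable def Ffun (t2 s m : ℕ) (x : ℝ × ℝ) : ENNReal :=
  ⨆ (n : ℕ) (_ : n < 2 ^ s),
    ENNReal.ofReal
      |∑ r ∈ Finset.range (2 ^ (s - t2 - 1)),
        walsh (upp (m + r * 2 ^ (t2 + 1)) (t2 + 1)) x.1 *
          walsh (upp (n + (m + r * 2 ^ (t2 + 1))) (t2 + 1)) x.2|

/-!
Reading the first binary digits of a point of `[0,1)` as a natural number `b` turns `ω_k` into
the sign `walshNat k b`, so both integrands are step functions on dyadic rectangles, bounded by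
the maximum `corrMax` over shifts `n ≤ 2^A` of the correlation sums
`Σ_{k<2^A} ω_k(a) ω_{k+n}(b)`. For `F_{t²,s}` this is the sum over the free digits, at level
`A = s - t² - 1`, once the factor `2^{t²+1}` is divided out of the truncated indices.

Splitting `k` by parity halves the level: an even shift at level `A + 1` gives the level-`A` sum
times `1 ± 1`, an odd one gives two consecutive level-`A` shifts. Summed over all codes `a, b`,
the maxima `M_A` and the maximal consecutive pairs `P_A` therefore satisfy
`M_{A+1} ≤ 4 M_A + 2 P_A` and `P_{A+1} ≤ 4 M_A + 4 P_A`, hence grow like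
`(4 + 2√2)^A = 8^A δ^A` with `δ = (2 + √2) / 4 < 1`, while each rectangle has area
`2^{-A} 2^{-(A+1)}`.
-/

open Finset

/-- `walshNat k b` is `ω_k` at any point whose binary digits begin with the bits of `b`. -/
noncomputable def walshNat (k b : ℕ) : ℝ :=
  (-1 : ℝ) ^ (∑ j ∈ range (k + 1), (k.testBit j).toNat * (b.testBit j).toNat)

lemma sum_range_testBit_mul_eq {k N M : ℕ} (h : ℕ → ℕ) (hN : k < 2 ^ N) (hM : k < 2 ^ M) :
    ∑ j ∈ range N, (k.testBit j).toNat * h j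
      = ∑ j ∈ range M, (k.testBit j).toNat * h j := by
  wlog hNM : N ≤ M generalizing N M
  · exact (this hM hN (by omega)).symm
  refine sum_subset (range_subset_range.2 hNM) fun j _ hj => ?_
  have hkj : k < 2 ^ j := hN.trans_le (Nat.pow_le_pow_right two_pos (by simpa using hj))
  simp [Nat.testBit_lt_two_pow hkj]

lemma walshNat_eq {k N : ℕ} (b : ℕ) (hN : k < 2 ^ N) :
    walshNat k b = (-1 : ℝ) ^ (∑ j ∈ range N, (k.testBit j).toNat * (b.testBit j).toNat) :=
  congrArg _ (sum_range_testBit_mul_eq _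
    ((Nat.lt_pow_self one_lt_two).trans (Nat.pow_lt_pow_succ one_lt_two)) hN)

lemma abs_walshNat (k b : ℕ) : |walshNat k b| = 1 := by
  simp [walshNat, abs_pow]

lemma walshNat_two_mul_add {ε : ℕ} (hε : ε ≤ 1) (k b : ℕ) :
    walshNat (2 * k + ε) b = (-1 : ℝ) ^ (ε * (b % 2)) * walshNat k (b / 2) := by
  have hk : k < 2 ^ (k + 1) := (Nat.lt_pow_self one_lt_two).trans (Nat.pow_lt_pow_succ one_lt_two)
  have hk' : 2 * k + ε < 2 ^ (k + 1 + 1) := by rw [pow_succ]; omega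
  rw [walshNat_eq b hk', walshNat_eq (b / 2) hk, sum_range_succ', pow_add]
  have hdiv : (2 * k + ε) / 2 = k := by omega
  have hk0 : ((2 * k + ε).testBit 0).toNat = ε := by
    rw [Nat.testBit_zero]; interval_cases ε <;> simp
  have hb0 : (b.testBit 0).toNat = b % 2 := by
    rw [Nat.testBit_zero]; rcases Nat.mod_two_eq_zero_or_one b with h | h <;> simp [h]
  simp only [Nat.testBit_add_one, hdiv, hk0, hb0]
  exact mul_comm _ _

lemma walshNat_two_mul (k b : ℕ) : walshNat (2 * k) b = walshNat k (b / 2) := by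
  simpa using walshNat_two_mul_add zero_le_one k b

lemma walshNat_two_mul_add_one (k b : ℕ) :
    walshNat (2 * k + 1) b = (-1 : ℝ) ^ (b % 2) * walshNat k (b / 2) := by
  simpa using walshNat_two_mul_add le_rfl k b

lemma walshNat_two_pow_mul (c r b : ℕ) : walshNat (2 ^ c * r) b = walshNat r (b / 2 ^ c) := by
  induction c generalizing b with
  | zero => simp
  | succ c ih => rw [pow_succ', mul_assoc, walshNat_two_mul, ih, Nat.div_div_eq_div_mul]

noncomputable def corrSum (A n a b : ℕ) : ℝ :=
  ∑ k ∈ range (2 ^ A), walshNat k a * walshNat (k + n) b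

lemma sum_range_two_mul {M : Type*} [AddCommMonoid M] (N : ℕ) (f : ℕ → M) :
    ∑ k ∈ range (2 * N), f k
      = ∑ k ∈ range N, f (2 * k) + ∑ k ∈ range N, f (2 * k + 1) := by
  induction N with
  | zero => simp
  | succ N ih =>
    rw [show 2 * (N + 1) = 2 * N + 1 + 1 by ring, sum_range_succ, sum_range_succ, ih,
      sum_range_succ, sum_range_succ]
    abel

lemma corrSum_succ_two_mul (A n a b : ℕ) :
    corrSum (A + 1) (2 * n) a b
      = (1 + (-1 : ℝ) ^ (a % 2 + b % 2)) * corrSum A n (a / 2) (b / 2) := by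
  have hev (k : ℕ) : 2 * k + 2 * n = 2 * (k + n) := by ring
  have hod (k : ℕ) : 2 * k + 1 + 2 * n = 2 * (k + n) + 1 := by ring
  simp only [corrSum, pow_succ', sum_range_two_mul, hev, hod, walshNat_two_mul,
    walshNat_two_mul_add_one, mul_sum, ← sum_add_distrib]
  exact sum_congr rfl fun k _ => by ring

lemma corrSum_succ_two_mul_add_one (A n a b : ℕ) :
    corrSum (A + 1) (2 * n + 1) a b
      = (-1 : ℝ) ^ (b % 2) * corrSum A n (a / 2) (b / 2)
        + (-1 : ℝ) ^ (a % 2) * corrSum A (n + 1) (a / 2) (b / 2) := by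
  have hev (k : ℕ) : 2 * k + (2 * n + 1) = 2 * (k + n) + 1 := by ring
  have hod (k : ℕ) : 2 * k + 1 + (2 * n + 1) = 2 * (k + (n + 1)) := by ring
  simp only [corrSum, pow_succ', sum_range_two_mul, hev, hod, walshNat_two_mul,
    walshNat_two_mul_add_one, mul_sum]
  congr 1 <;> exact sum_congr rfl fun k _ => by ring

lemma abs_corrSum_zero (n a b : ℕ) : |corrSum 0 n a b| = 1 := by
  simp [corrSum, abs_walshNat]

lemma corrSum_succ_two_mul_of_ne {A n a b : ℕ} (h : a % 2 ≠ b % 2) :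
    corrSum (A + 1) (2 * n) a b = 0 := by
  rw [corrSum_succ_two_mul, show a % 2 + b % 2 = 1 by omega]
  norm_num

lemma abs_corrSum_succ_two_mul_of_eq {A n a b : ℕ} (h : a % 2 = b % 2) :
    |corrSum (A + 1) (2 * n) a b| = 2 * |corrSum A n (a / 2) (b / 2)| := by
  rw [corrSum_succ_two_mul, h, ← two_mul, pow_mul, neg_one_sq, one_pow, abs_mul]
  norm_num

lemma abs_corrSum_succ_two_mul_add_one_le (A n a b : ℕ) :
    |corrSum (A + 1) (2 * n + 1) a b|
      ≤ |corrSum A n (a / 2) (b / 2)| + |corrSum A (n + 1) (a / 2) (b / 2)| := by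
  rw [corrSum_succ_two_mul_add_one]
  refine (abs_add_le _ _).trans_eq ?_
  simp [abs_mul, abs_pow]

noncomputable def corrMax (A a b : ℕ) : ℝ :=
  (range (2 ^ A + 1)).sup' nonempty_range_add_one fun n => |corrSum A n a b|

noncomputable def corrPairMax (A a b : ℕ) : ℝ :=
  (range (2 ^ A)).sup' (nonempty_range_iff.2 (by positivity))
    fun n => |corrSum A n a b| + |corrSum A (n + 1) a b|

section corrMax

variable {A n a b : ℕ}

lemma abs_corrSum_le_corrMax (hn : n ≤ 2 ^ A) : |corrSum A n a b| ≤ corrMax A a b :=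
  le_sup' (fun n => |corrSum A n a b|) (mem_range.2 (Nat.lt_succ_of_le hn))

lemma abs_corrSum_add_abs_corrSum_le_corrPairMax (hn : n < 2 ^ A) :
    |corrSum A n a b| + |corrSum A (n + 1) a b| ≤ corrPairMax A a b :=
  le_sup' (fun n => |corrSum A n a b| + |corrSum A (n + 1) a b|) (mem_range.2 hn)

lemma corrMax_nonneg : 0 ≤ corrMax A a b :=
  (abs_nonneg _).trans (abs_corrSum_le_corrMax (Nat.zero_le _))

lemma corrPairMax_nonneg : 0 ≤ corrPairMax A a b :=
  (add_nonneg (abs_nonneg _) (abs_nonneg _)).trans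
    (abs_corrSum_add_abs_corrSum_le_corrPairMax (Nat.two_pow_pos A))

lemma abs_corrSum_succ_two_mul_add_one_le_corrPairMax (hn : n < 2 ^ A) :
    |corrSum (A + 1) (2 * n + 1) a b| ≤ corrPairMax A (a / 2) (b / 2) :=
  (abs_corrSum_succ_two_mul_add_one_le A n a b).trans
    (abs_corrSum_add_abs_corrSum_le_corrPairMax hn)

lemma corrMax_succ_le_of_ne (h : a % 2 ≠ b % 2) :
    corrMax (A + 1) a b ≤ corrPairMax A (a / 2) (b / 2) := by
  refine sup'_le _ _ fun k hk => ?_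
  have hk : k ≤ 2 * 2 ^ A := by rw [← pow_succ']; exact Nat.lt_succ_iff.1 (mem_range.1 hk)
  obtain ⟨n, rfl | rfl⟩ := Nat.even_or_odd' k
  · rw [corrSum_succ_two_mul_of_ne h, abs_zero]
    exact corrPairMax_nonneg
  · exact abs_corrSum_succ_two_mul_add_one_le_corrPairMax (by omega)

lemma corrPairMax_succ_le_of_ne (h : a % 2 ≠ b % 2) :
    corrPairMax (A + 1) a b ≤ corrPairMax A (a / 2) (b / 2) := by
  refine sup'_le _ _ fun k hk => ?_
  have hk : k < 2 * 2 ^ A := by rw [← pow_succ']; exact mem_range.1 hk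
  obtain ⟨n, rfl | rfl⟩ := Nat.even_or_odd' k
  · rw [corrSum_succ_two_mul_of_ne h, abs_zero, zero_add]
    exact abs_corrSum_succ_two_mul_add_one_le_corrPairMax (by omega)
  · rw [show 2 * n + 1 + 1 = 2 * (n + 1) by ring, corrSum_succ_two_mul_of_ne h, abs_zero,
      add_zero]
    exact abs_corrSum_succ_two_mul_add_one_le_corrPairMax (by omega)

lemma corrMax_succ_le_of_eq (h : a % 2 = b % 2) :
    corrMax (A + 1) a b ≤ 2 * corrMax A (a / 2) (b / 2) := by
  refine sup'_le _ _ fun k hk => ?_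
  have hk : k ≤ 2 * 2 ^ A := by rw [← pow_succ']; exact Nat.lt_succ_iff.1 (mem_range.1 hk)
  obtain ⟨n, rfl | rfl⟩ := Nat.even_or_odd' k
  · rw [abs_corrSum_succ_two_mul_of_eq h]
    exact mul_le_mul_of_nonneg_left (abs_corrSum_le_corrMax (by omega)) two_pos.le
  · linarith [abs_corrSum_succ_two_mul_add_one_le A n a b,
      abs_corrSum_le_corrMax (a := a / 2) (b := b / 2) (show n ≤ 2 ^ A by omega),
      abs_corrSum_le_corrMax (a := a / 2) (b := b / 2) (show n + 1 ≤ 2 ^ A by omega)]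

lemma corrPairMax_succ_le_of_eq (h : a % 2 = b % 2) :
    corrPairMax (A + 1) a b
      ≤ 2 * corrMax A (a / 2) (b / 2) + corrPairMax A (a / 2) (b / 2) := by
  refine sup'_le _ _ fun k hk => ?_
  have hk : k < 2 * 2 ^ A := by rw [← pow_succ']; exact mem_range.1 hk
  obtain ⟨n, rfl | rfl⟩ := Nat.even_or_odd' k
  · rw [abs_corrSum_succ_two_mul_of_eq h]
    linarith [abs_corrSum_le_corrMax (a := a / 2) (b := b / 2) (show n ≤ 2 ^ A by omega),
      abs_corrSum_succ_two_mul_add_one_le_corrPairMax (a := a) (b := b) (show n < 2 ^ A by omega)]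
  · rw [show 2 * n + 1 + 1 = 2 * (n + 1) by ring, abs_corrSum_succ_two_mul_of_eq h]
    linarith [abs_corrSum_le_corrMax (a := a / 2) (b := b / 2) (show n + 1 ≤ 2 ^ A by omega),
      abs_corrSum_succ_two_mul_add_one_le_corrPairMax (a := a) (b := b) (show n < 2 ^ A by omega)]

end corrMax

noncomputable def corrMaxSum (A : ℕ) : ℝ :=
  ∑ a ∈ range (2 ^ A), ∑ b ∈ range (2 ^ (A + 1)), corrMax A a b

noncomputable def corrPairMaxSum (A : ℕ) : ℝ :=
  ∑ a ∈ range (2 ^ A), ∑ b ∈ range (2 ^ (A + 1)), corrPairMax A a b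

lemma sum_range_two_pow_succ {M : Type*} [AddCommMonoid M] (N : ℕ) (f : ℕ → M) :
    ∑ a ∈ range (2 ^ (N + 1)), f a = ∑ a ∈ range (2 ^ N), (f (2 * a) + f (2 * a + 1)) := by
  rw [pow_succ', sum_range_two_mul, sum_add_distrib]

lemma sum_sum_range_two_pow_succ_le {A : ℕ} {f g : ℕ → ℕ → ℝ}
    (h : ∀ a b, f (2 * a) (2 * b) + f (2 * a) (2 * b + 1) + f (2 * a + 1) (2 * b)
      + f (2 * a + 1) (2 * b + 1) ≤ g a b) :
    ∑ a ∈ range (2 ^ (A + 1)), ∑ b ∈ range (2 ^ (A + 1 + 1)), f a b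
      ≤ ∑ a ∈ range (2 ^ A), ∑ b ∈ range (2 ^ (A + 1)), g a b := by
  rw [sum_range_two_pow_succ A]
  simp only [sum_range_two_pow_succ (A + 1), ← sum_add_distrib]
  exact sum_le_sum fun a _ => sum_le_sum fun b _ => by linarith [h a b]

lemma corrMaxSum_succ_le (A : ℕ) :
    corrMaxSum (A + 1) ≤ 4 * corrMaxSum A + 2 * corrPairMaxSum A := by
  simp only [corrMaxSum, corrPairMaxSum, mul_sum, ← sum_add_distrib]
  refine sum_sum_range_two_pow_succ_le fun a b => ?_
  have h₀₀ := corrMax_succ_le_of_eq (A := A) (a := 2 * a) (b := 2 * b) (by omega)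
  have h₀₁ := corrMax_succ_le_of_ne (A := A) (a := 2 * a) (b := 2 * b + 1) (by omega)
  have h₁₀ := corrMax_succ_le_of_ne (A := A) (a := 2 * a + 1) (b := 2 * b) (by omega)
  have h₁₁ := corrMax_succ_le_of_eq (A := A) (a := 2 * a + 1) (b := 2 * b + 1) (by omega)
  simp only [Nat.mul_add_div two_pos, Nat.mul_div_cancel_left _ two_pos, Nat.reduceDiv,
    add_zero] at *
  linarith

lemma corrPairMaxSum_succ_le (A : ℕ) :
    corrPairMaxSum (A + 1) ≤ 4 * corrMaxSum A + 4 * corrPairMaxSum A := by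
  simp only [corrMaxSum, corrPairMaxSum, mul_sum, ← sum_add_distrib]
  refine sum_sum_range_two_pow_succ_le fun a b => ?_
  have h₀₀ := corrPairMax_succ_le_of_eq (A := A) (a := 2 * a) (b := 2 * b) (by omega)
  have h₀₁ := corrPairMax_succ_le_of_ne (A := A) (a := 2 * a) (b := 2 * b + 1) (by omega)
  have h₁₀ := corrPairMax_succ_le_of_ne (A := A) (a := 2 * a + 1) (b := 2 * b) (by omega)
  have h₁₁ := corrPairMax_succ_le_of_eq (A := A) (a := 2 * a + 1) (b := 2 * b + 1) (by omega)
  simp only [Nat.mul_add_div two_pos, Nat.mul_div_cancel_left _ two_pos, Nat.reduceDiv,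
    add_zero] at *
  linarith

lemma corrMaxSum_zero_le : corrMaxSum 0 ≤ 2 := by
  have h (a b : ℕ) : corrMax 0 a b ≤ 1 := sup'_le _ _ fun n _ => (abs_corrSum_zero n a b).le
  norm_num [corrMaxSum, sum_range_succ]
  linarith [h 0 0, h 0 1]

lemma corrPairMaxSum_zero_le : corrPairMaxSum 0 ≤ 4 := by
  have h (a b : ℕ) : corrPairMax 0 a b ≤ 2 :=
    sup'_le _ _ fun n _ => by rw [abs_corrSum_zero, abs_corrSum_zero]; norm_num
  norm_num [corrPairMaxSum, sum_range_succ]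
  linarith [h 0 0, h 0 1]

noncomputable def decayRate : ℝ := (2 + √2) / 4

lemma decayRate_pos : 0 < decayRate := by unfold decayRate; positivity

lemma decayRate_lt_one : decayRate < 1 := by
  have : √2 < 2 := by rw [Real.sqrt_lt' two_pos]; norm_num
  unfold decayRate; linarith

/-- `(1, √2 / 2)` is a left eigenvector of the recursion matrix `!![4, 2; 4, 4]` for its Perron
eigenvalue `4 + 2√2 = 8 * decayRate`. -/
lemma corrMaxSum_add_le (A : ℕ) :
    corrMaxSum A + √2 / 2 * corrPairMaxSum A ≤ (2 + 2 * √2) * (8 * decayRate) ^ A := by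
  have hsq : √2 * √2 = 2 := Real.mul_self_sqrt two_pos.le
  have hs : 0 ≤ √2 := Real.sqrt_nonneg 2
  induction A with
  | zero => nlinarith [corrMaxSum_zero_le, corrPairMaxSum_zero_le]
  | succ A ih =>
    have h8 : 8 * decayRate = 4 + 2 * √2 := by unfold decayRate; ring
    calc corrMaxSum (A + 1) + √2 / 2 * corrPairMaxSum (A + 1)
        ≤ 4 * corrMaxSum A + 2 * corrPairMaxSum A
          + √2 / 2 * (4 * corrMaxSum A + 4 * corrPairMaxSum A) := by
          gcongr
          · exact corrMaxSum_succ_le A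
          · exact corrPairMaxSum_succ_le A
      _ = (8 * decayRate) * (corrMaxSum A + √2 / 2 * corrPairMaxSum A) := by
          rw [h8]; linear_combination (-corrPairMaxSum A) * hsq
      _ ≤ (8 * decayRate) * ((2 + 2 * √2) * (8 * decayRate) ^ A) := by
          gcongr; exact (mul_pos (by norm_num) decayRate_pos).le
      _ = (2 + 2 * √2) * (8 * decayRate) ^ (A + 1) := by ring

lemma corrMaxSum_div_le (A : ℕ) : corrMaxSum A / (2 * 8 ^ A) ≤ (1 + √2) * decayRate ^ A := by
  have hP : 0 ≤ √2 / 2 * corrPairMaxSum A :=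
    mul_nonneg (by positivity) (sum_nonneg fun _ _ => sum_nonneg fun _ _ => corrPairMax_nonneg)
  rw [div_le_iff₀ (by positivity)]
  calc corrMaxSum A ≤ (2 + 2 * √2) * (8 * decayRate) ^ A := by linarith [corrMaxSum_add_le A]
    _ = (1 + √2) * decayRate ^ A * (2 * 8 ^ A) := by ring

lemma dig_lt_two (x : ℝ) (j : ℕ) : dig x j < 2 := Nat.mod_lt _ two_pos

lemma measurable_dig (j : ℕ) : Measurable fun x : ℝ => dig x j :=
  (measurable_of_countable fun n : ℤ => n.toNat % 2).comp
    (Int.measurable_floor.comp (measurable_id.mul_const _))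

lemma floor_mul_two_pow_succ {x : ℝ} (hx : 0 ≤ x) (N : ℕ) :
    ⌊x * 2 ^ (N + 1)⌋ = 2 * ⌊x * 2 ^ N⌋ + dig x N := by
  have hx2 : x * 2 ^ (N + 1) = 2 * (x * 2 ^ N) := by ring
  have h₁ : 2 * ⌊x * 2 ^ N⌋ ≤ ⌊x * 2 ^ (N + 1)⌋ :=
    Int.le_floor.2 (by push_cast; linarith [Int.floor_le (x * 2 ^ N)])
  have h₂ : ⌊x * 2 ^ (N + 1)⌋ < 2 * ⌊x * 2 ^ N⌋ + 2 :=
    Int.floor_lt.2 (by push_cast; linarith [Int.lt_floor_add_one (x * 2 ^ N)])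
  have h₃ : 0 ≤ ⌊x * 2 ^ N⌋ := Int.floor_nonneg.2 (by positivity)
  rw [dig]
  omega

lemma floor_mul_two_pow_eq_of_dig_eq {x y : ℝ} (hx : x ∈ Set.Ico 0 1) (hy : y ∈ Set.Ico 0 1)
    {N : ℕ} (h : ∀ j < N, dig x j = dig y j) : ⌊x * 2 ^ N⌋ = ⌊y * 2 ^ N⌋ := by
  induction N with
  | zero => simp [Int.floor_eq_zero_iff.2 hx, Int.floor_eq_zero_iff.2 hy]
  | succ N ih =>
    rw [floor_mul_two_pow_succ hx.1, floor_mul_two_pow_succ hy.1, ih fun j hj => h j (by omega),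
      h N N.lt_succ_self]

lemma volume_le_of_dig_eq {S : Set ℝ} (hS : S ⊆ Set.Ico 0 1) {N : ℕ}
    (h : ∀ x ∈ S, ∀ y ∈ S, ∀ j < N, dig x j = dig y j) : volume S ≤ (2 ^ N)⁻¹ := by
  rcases S.eq_empty_or_nonempty with rfl | ⟨y, hy⟩
  · simp
  have h2N : (0 : ℝ) < 2 ^ N := by positivity
  have hsub : S ⊆ Set.Ico (⌊y * 2 ^ N⌋ / 2 ^ N) ((⌊y * 2 ^ N⌋ + 1) / 2 ^ N) := by
    intro x hx
    rw [← floor_mul_two_pow_eq_of_dig_eq (hS hx) (hS hy) (h x hx y hy), Set.mem_Ico,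
      div_le_iff₀ h2N, lt_div_iff₀ h2N]
    exact ⟨Int.floor_le _, Int.lt_floor_add_one _⟩
  refine (measure_mono hsub).trans_eq ?_
  rw [Real.volume_Ico, ← sub_div, add_sub_cancel_left, one_div, ENNReal.ofReal_inv_of_pos h2N,
    ENNReal.ofReal_pow zero_le_two, ENNReal.ofReal_ofNat]

noncomputable def digitCode : ℕ → ℕ → ℝ → ℕ
  | 0, _, _ => 0
  | B + 1, c, x => dig x c + 2 * digitCode B (c + 1) x

lemma measurable_digitCode (B c : ℕ) : Measurable (digitCode B c) := by
  induction B generalizing c with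
  | zero => exact measurable_const
  | succ B ih => exact (measurable_dig c).add ((ih (c + 1)).const_mul 2)

lemma digitCode_lt (B c : ℕ) (x : ℝ) : digitCode B c x < 2 ^ B := by
  induction B generalizing c with
  | zero => simp [digitCode]
  | succ B ih =>
    have := dig_lt_two x c
    have := ih (c + 1)
    rw [digitCode, pow_succ]
    omega

lemma toNat_testBit_digitCode {B j : ℕ} (hj : j < B) (c : ℕ) (x : ℝ) :
    ((digitCode B c x).testBit j).toNat = dig x (c + j) := by
  induction B generalizing c j with
  | zero => omega
  | succ B ih =>
    have hd := dig_lt_two x c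
    rcases j with _ | j
    · rw [digitCode, Nat.testBit_zero]
      interval_cases dig x c <;> simp [Nat.add_mul_mod_self_left]
    · rw [digitCode, Nat.testBit_add_one, show (dig x c + 2 * digitCode B (c + 1) x) / 2
        = digitCode B (c + 1) x by omega, ih (by omega), add_right_comm, add_assoc]

lemma digitCode_div_two_pow (c B d : ℕ) (x : ℝ) :
    digitCode (c + B) d x / 2 ^ c = digitCode B (d + c) x := by
  induction c generalizing d with
  | zero => simp
  | succ c ih =>
    have hd := dig_lt_two x d
    rw [add_right_comm, digitCode, pow_succ', ← Nat.div_div_eq_div_mul,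
      show (dig x d + 2 * digitCode (c + B) (d + 1) x) / 2 = digitCode (c + B) (d + 1) x by omega,
      ih, add_assoc, add_comm 1 c]

lemma walsh_eq_walshNat {k L : ℕ} {x : ℝ} {b : ℕ} (hk : k < 2 ^ L)
    (h : ∀ j < L, dig x j = (b.testBit j).toNat) : walsh k x = walshNat k b := by
  refine congrArg _ (sum_congr rfl fun j _ => ?_)
  cases hkj : k.testBit j
  · simp
  · have hjL : j < L := (Nat.pow_lt_pow_iff_right one_lt_two).1
      ((Nat.ge_two_pow_of_testBit hkj).trans_lt hk)
    rw [h j hjL]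

lemma walsh_two_pow_mul {r B : ℕ} (hr : r < 2 ^ B) (c : ℕ) (x : ℝ) :
    walsh (2 ^ c * r) x = walshNat r (digitCode B c x) := by
  have hlt : 2 ^ c * r < 2 ^ (c + B) := by
    rw [pow_add]; exact Nat.mul_lt_mul_of_pos_left hr (Nat.two_pow_pos c)
  rw [walsh_eq_walshNat (b := digitCode (c + B) 0 x) hlt fun j hj => by
      rw [toNat_testBit_digitCode hj, zero_add],
    walshNat_two_pow_mul, digitCode_div_two_pow, zero_add]

lemma upp_add_mul_two_pow (a r c : ℕ) : upp (a + r * 2 ^ c) c = 2 ^ c * (a / 2 ^ c + r) := by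
  rw [upp, Nat.add_mul_div_right _ _ (Nat.two_pow_pos c)]

lemma Idyadic_zero (u : ℝ) : Idyadic 0 u = Set.Ico 0 1 := by
  ext; simp [Idyadic]

lemma measurableSet_Idyadic (a : ℕ) (u : ℝ) : MeasurableSet (Idyadic a u) := by
  have hI : Idyadic a u
      = Set.Ico 0 1 ∩ ⋂ j ∈ Set.Iio a, (fun y => dig y j) ⁻¹' {dig u j} := by
    ext; simp [Idyadic]
  rw [hI]
  exact measurableSet_Ico.inter (.biInter (Set.to_countable _)
    fun j _ => measurable_dig j (measurableSet_singleton _))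

lemma volume_Idyadic_inter_digitCode_le (c B : ℕ) (u : ℝ) (a : ℕ) :
    volume (Idyadic c u ∩ digitCode B c ⁻¹' {a}) ≤ (2 ^ (c + B))⁻¹ := by
  refine volume_le_of_dig_eq (fun x hx => hx.1.1) ?_
  rintro x ⟨⟨-, hxu⟩, hxa⟩ y ⟨⟨-, hyu⟩, hya⟩ j hj
  by_cases hjc : j < c
  · rw [hxu j hjc, hyu j hjc]
  obtain ⟨i, rfl⟩ := Nat.exists_eq_add_of_le (not_lt.1 hjc)
  rw [← toNat_testBit_digitCode (by omega : i < B) c x,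
    ← toNat_testBit_digitCode (by omega : i < B) c y, hxa, hya]

lemma setLIntegral_le_sum_mul_measure_fiber {α β : Type*} [MeasurableSpace α]
    [MeasurableSpace β] [MeasurableSingletonClass β] {μ : Measure α} {T : Set α}
    (hT : MeasurableSet T) {g : α → β} (hg : Measurable g) {s : Finset β}
    (hgs : ∀ x ∈ T, g x ∈ s) {f : α → ENNReal} {v : β → ENNReal}
    (hf : ∀ x ∈ T, f x ≤ v (g x)) :
    ∫⁻ x in T, f x ∂μ ≤ ∑ p ∈ s, v p * μ (T ∩ g ⁻¹' {p}) := by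
  have hm (p : β) : MeasurableSet (T ∩ g ⁻¹' {p}) := hT.inter (hg (measurableSet_singleton p))
  have hT' : T = ⋃ p ∈ s, T ∩ g ⁻¹' {p} := by
    ext x; simpa using fun hx => hgs x hx
  conv_lhs => rw [hT']
  rw [lintegral_biUnion_finset ((Set.pairwiseDisjoint_fiber g _).mono
    fun _ => Set.inter_subset_right) fun p _ => hm p]
  refine sum_le_sum fun p _ => ?_
  calc ∫⁻ x in T ∩ g ⁻¹' {p}, f x ∂μ ≤ ∫⁻ _ in T ∩ g ⁻¹' {p}, v p ∂μ :=
        setLIntegral_mono' (hm p) fun x hx => (hf x hx.1).trans_eq (congrArg v hx.2)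
    _ = v p * μ (T ∩ g ⁻¹' {p}) := setLIntegral_const _ _

lemma volume_Idyadic_prod_inter_digitCode_le (c B₁ B₂ : ℕ) (u₁ u₂ : ℝ)
    (p : ℕ × ℕ) :
    volume ((Idyadic c u₁ ×ˢ Idyadic c u₂) ∩
        (fun x : ℝ × ℝ => (digitCode B₁ c x.1, digitCode B₂ c x.2)) ⁻¹' {p})
      ≤ ENNReal.ofReal ((2 ^ (c + B₁) * 2 ^ (c + B₂))⁻¹) := by
  have hfib : (Idyadic c u₁ ×ˢ Idyadic c u₂) ∩
        (fun x : ℝ × ℝ => (digitCode B₁ c x.1, digitCode B₂ c x.2)) ⁻¹' {p}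
      = (Idyadic c u₁ ∩ digitCode B₁ c ⁻¹' {p.1})
          ×ˢ (Idyadic c u₂ ∩ digitCode B₂ c ⁻¹' {p.2}) := by
    ext x
    simp only [Set.mem_inter_iff, Set.mem_prod, Set.mem_preimage, Set.mem_singleton_iff,
      Prod.ext_iff]
    tauto
  rw [hfib, Measure.volume_eq_prod, Measure.prod_prod, mul_inv, ENNReal.ofReal_mul (by positivity),
    ENNReal.ofReal_inv_of_pos (by positivity), ENNReal.ofReal_inv_of_pos (by positivity),
    ENNReal.ofReal_pow zero_le_two, ENNReal.ofReal_pow zero_le_two, ENNReal.ofReal_ofNat]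
  gcongr <;> exact volume_Idyadic_inter_digitCode_le _ _ _ _

lemma setLIntegral_Idyadic_prod_le {c B : ℕ} (u₁ u₂ : ℝ) {κ : ℝ} (hκ : 0 ≤ κ)
    {f : ℝ × ℝ → ENNReal}
    (hf : ∀ x, f x ≤
      ENNReal.ofReal (κ * corrMax B (digitCode B c x.1) (digitCode (B + 1) c x.2))) :
    ∫⁻ x in Idyadic c u₁ ×ˢ Idyadic c u₂, f x
      ≤ ENNReal.ofReal (κ * corrMaxSum B / (2 ^ (c + B) * 2 ^ (c + (B + 1)))) := by
  set ε : ℝ := (2 ^ (c + B) * 2 ^ (c + (B + 1)))⁻¹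
  have hg : Measurable fun x : ℝ × ℝ => (digitCode B c x.1, digitCode (B + 1) c x.2) :=
    ((measurable_digitCode B c).comp measurable_fst).prodMk
      ((measurable_digitCode (B + 1) c).comp measurable_snd)
  calc ∫⁻ x in Idyadic c u₁ ×ˢ Idyadic c u₂, f x
      ≤ ∑ p ∈ range (2 ^ B) ×ˢ range (2 ^ (B + 1)), ENNReal.ofReal (κ * corrMax B p.1 p.2)
          * volume ((Idyadic c u₁ ×ˢ Idyadic c u₂) ∩
            (fun x : ℝ × ℝ => (digitCode B c x.1, digitCode (B + 1) c x.2)) ⁻¹' {p}) :=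
        setLIntegral_le_sum_mul_measure_fiber
          ((measurableSet_Idyadic c u₁).prod (measurableSet_Idyadic c u₂)) hg
          (fun _ _ => mem_product.2
            ⟨mem_range.2 (digitCode_lt ..), mem_range.2 (digitCode_lt ..)⟩)
          fun x _ => hf x
    _ ≤ ∑ p ∈ range (2 ^ B) ×ˢ range (2 ^ (B + 1)),
          ENNReal.ofReal (κ * corrMax B p.1 p.2) * ENNReal.ofReal ε := by
        gcongr; exact volume_Idyadic_prod_inter_digitCode_le ..
    _ = ENNReal.ofReal
          (∑ p ∈ range (2 ^ B) ×ˢ range (2 ^ (B + 1)), κ * corrMax B p.1 p.2 * ε) := by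
        have hnn (p : ℕ × ℕ) : 0 ≤ κ * corrMax B p.1 p.2 := mul_nonneg hκ corrMax_nonneg
        rw [ENNReal.ofReal_sum_of_nonneg fun p _ => mul_nonneg (hnn p) (by positivity)]
        simp only [ENNReal.ofReal_mul (hnn _)]
    _ = ENNReal.ofReal (κ * corrMaxSum B / (2 ^ (c + B) * 2 ^ (c + (B + 1)))) := by
        rw [← sum_mul, ← mul_sum, sum_product, div_eq_mul_inv]
        rfl

lemma iSup_walsh_correlation_le (A : ℕ) (x : ℝ × ℝ) :
    ⨆ (n : ℕ) (_ : n ≤ 2 ^ A),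
        ENNReal.ofReal
          |(2 ^ A : ℝ)⁻¹ * ∑ k ∈ range (2 ^ A), walsh k x.1 * walsh (k + n) x.2|
      ≤ ENNReal.ofReal
          ((2 ^ A)⁻¹ * corrMax A (digitCode A 0 x.1) (digitCode (A + 1) 0 x.2)) := by
  refine iSup₂_le fun n hn => ENNReal.ofReal_le_ofReal ?_
  have hw {j B : ℕ} (hj : j < 2 ^ B) (y : ℝ) : walsh j y = walshNat j (digitCode B 0 y) := by
    simpa using walsh_two_pow_mul hj 0 y
  have hsum : ∑ k ∈ range (2 ^ A), walsh k x.1 * walsh (k + n) x.2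
      = corrSum A n (digitCode A 0 x.1) (digitCode (A + 1) 0 x.2) :=
    sum_congr rfl fun k hk => by
      have hk := mem_range.1 hk
      rw [hw hk, hw (B := A + 1) (by rw [pow_succ]; omega)]
  rw [hsum, abs_mul, abs_of_pos (by positivity)]
  exact mul_le_mul_of_nonneg_left (abs_corrSum_le_corrMax hn) (by positivity)

lemma Ffun_le_corrMax {t2 m : ℕ} (hm : m < 2 ^ (t2 + 1)) (B : ℕ) (x : ℝ × ℝ) :
    Ffun t2 (t2 + 1 + B) m x
      ≤ ENNReal.ofReal
          (corrMax B (digitCode B (t2 + 1) x.1) (digitCode (B + 1) (t2 + 1) x.2)) := by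
  refine iSup₂_le fun n hn => ENNReal.ofReal_le_ofReal ?_
  set q := (n + m) / 2 ^ (t2 + 1)
  have hq : q ≤ 2 ^ B := by
    have : n + m < (2 ^ B + 1) * 2 ^ (t2 + 1) := by
      rw [pow_add, mul_comm] at hn; nlinarith
    exact Nat.lt_succ_iff.1 ((Nat.div_lt_iff_lt_mul (Nat.two_pow_pos _)).2 this)
  have hterm : ∀ r ∈ range (2 ^ B),
      walsh (upp (m + r * 2 ^ (t2 + 1)) (t2 + 1)) x.1
          * walsh (upp (n + (m + r * 2 ^ (t2 + 1))) (t2 + 1)) x.2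
        = walshNat r (digitCode B (t2 + 1) x.1)
          * walshNat (r + q) (digitCode (B + 1) (t2 + 1) x.2) := by
    intro r hr
    have hr := mem_range.1 hr
    have hqr : q + r < 2 ^ (B + 1) := by rw [pow_succ]; omega
    rw [upp_add_mul_two_pow, ← add_assoc, upp_add_mul_two_pow, Nat.div_eq_of_lt hm, zero_add,
      walsh_two_pow_mul hr, walsh_two_pow_mul hqr, add_comm q]
  rw [show t2 + 1 + B - t2 - 1 = B by omega, sum_congr rfl hterm]
  exact abs_corrSum_le_corrMax hq

theorem lintegral_iSup_walsh_correlation_le (A : ℕ) :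
    ∫⁻ x in Set.Ico (0 : ℝ) 1 ×ˢ Set.Ico (0 : ℝ) 1,
        ⨆ (n : ℕ) (_ : n ≤ 2 ^ A),
          ENNReal.ofReal
            |(2 ^ A : ℝ)⁻¹ * ∑ k ∈ range (2 ^ A), walsh k x.1 * walsh (k + n) x.2|
      ≤ ENNReal.ofReal ((1 + √2) * decayRate ^ A) := by
  have h := setLIntegral_Idyadic_prod_le (c := 0) 0 0 (by positivity)
    (iSup_walsh_correlation_le A)
  rw [Idyadic_zero] at h
  refine h.trans (ENNReal.ofReal_le_ofReal ((le_of_eq ?_).trans (corrMaxSum_div_le A)))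
  rw [show (8 : ℝ) = 2 * 2 * 2 by norm_num, mul_pow, mul_pow, zero_add, zero_add, pow_succ]
  field_simp

theorem setLIntegral_Ffun_le {t2 s : ℕ} (hts : t2 < s) {m : ℕ} (hm : m < 2 ^ (t2 + 1))
    (u : ℝ × ℝ) :
    (2 : ENNReal) ^ (2 * t2) *
        ∫⁻ x in Idyadic (t2 + 1) u.1 ×ˢ Idyadic (t2 + 1) u.2, Ffun t2 s m x
      ≤ ENNReal.ofReal ((1 + √2) * 2 ^ (s - t2) * decayRate ^ (s - t2)) := by
  obtain ⟨B, rfl⟩ : ∃ B, s = t2 + 1 + B := ⟨s - t2 - 1, by omega⟩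
  have h := setLIntegral_Idyadic_prod_le u.1 u.2 zero_le_one fun x => by
    simpa using Ffun_le_corrMax hm B x
  have hscale : (2 : ℝ) ^ (2 * t2)
        * (1 * corrMaxSum B / (2 ^ (t2 + 1 + B) * 2 ^ (t2 + 1 + (B + 1))))
      = corrMaxSum B / (2 * 8 ^ B) * (2 ^ B / 4) := by
    rw [show (8 : ℝ) = 2 * 2 * 2 by norm_num, mul_pow, mul_pow, two_mul, pow_add]
    field_simp
    ring
  have hδ : (1 : ℝ) / 8 ≤ decayRate := by unfold decayRate; linarith [Real.sqrt_nonneg 2]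
  rw [show t2 + 1 + B - t2 = B + 1 by omega, ← ENNReal.ofReal_ofNat 2,
    ← ENNReal.ofReal_pow zero_le_two]
  refine (mul_le_mul_right h _).trans ?_
  rw [← ENNReal.ofReal_mul (by positivity), hscale]
  refine ENNReal.ofReal_le_ofReal ?_
  calc corrMaxSum B / (2 * 8 ^ B) * (2 ^ B / 4) ≤ (1 + √2) * decayRate ^ B * (2 ^ B / 4) := by
        gcongr; exact corrMaxSum_div_le B
    _ = (1 + √2) * 2 ^ (B + 1) * decayRate ^ B * (1 / 8) := by ring
    _ ≤ (1 + √2) * 2 ^ (B + 1) * decayRate ^ B * decayRate := by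
        have := decayRate_pos
        gcongr
    _ = (1 + √2) * 2 ^ (B + 1) * decayRate ^ (B + 1) := by ring

/-- With `δ` the constant of the exponential-decay lemma, for all
`t² < s`, all fixed lower digits and all dyadic squares `I_{t²+1}(u¹) × I_{t²+1}(u²)` one has
`2^{2t²} ∫ F_{t²,s} ≤ C 2^{s−t²} δ^{s−t²}`. -/
theorem F_integral_bound :
    ∃ C : ℝ, 0 < C ∧ ∃ δ : ℝ, 0 < δ ∧ δ < 1 ∧
      (∀ A : ℕ,
        ∫⁻ x in Set.Ico (0 : ℝ) 1 ×ˢ Set.Ico (0 : ℝ) 1,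
          ⨆ (n : ℕ) (_ : n ≤ 2 ^ A),
            ENNReal.ofReal
              |(2 ^ A : ℝ)⁻¹ * ∑ k ∈ Finset.range (2 ^ A), walsh k x.1 * walsh (k + n) x.2|
        ≤ ENNReal.ofReal (C * δ ^ A)) ∧
      ∀ t2 s : ℕ, t2 < s → ∀ m : ℕ, m < 2 ^ (t2 + 1) →
        ∀ u : ℝ × ℝ, u ∈ Set.Ico (0 : ℝ) 1 ×ˢ Set.Ico (0 : ℝ) 1 →
          (2 : ENNReal) ^ (2 * t2) *
              ∫⁻ x in Idyadic (t2 + 1) u.1 ×ˢ Idyadic (t2 + 1) u.2, Ffun t2 s m x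
            ≤ ENNReal.ofReal (C * 2 ^ (s - t2) * δ ^ (s - t2)) :=
  ⟨1 + √2, by positivity, decayRate, decayRate_pos, decayRate_lt_one,
    lintegral_iSup_walsh_correlation_le, fun _ _ hts _ hm u _ => setLIntegral_Ffun_le hts hm u⟩
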